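/- arXiv:1410.7419 — 6 statements merged into one kernel-verified Lean document; each statement's English description precedes it below -/
import Mathlib

section
/- Let M be a rank set contained in [n] with k intervals, and let f_M ∈ Bound(k,n) be the associated bounded affine permutation (sending b_i to a_i + n and d_i to c_i). Then for all integers r ≤ s with [r,s] ⊆ [n], the number of intervals of M contained in [r,s] equals the number of integers p < s+1 with f_M(p) > n+r-1, i.e. #[r,s](M) = #[s+1, n+r-1](f_M). -/
/-- For a rank set `M` with associated bounded affine permutation `f_M`,
`#[r,s](M) = #[s+1, n+r-1](f_M)` for all `[r,s] ⊆ [n]`. -/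
theorem stmt2 (n k : ℕ) (a b : Fin k → ℕ)
    (ha1 : ∀ i, 1 ≤ a i) (hab : ∀ i, a i ≤ b i) (hbn : ∀ i, b i ≤ n)
    (hainj : Function.Injective a) (hbmono : StrictMono b)
    (c d : Fin (n - k) → ℕ)
    (hcmono : StrictMono c) (hdmono : StrictMono d)
    (hcrange : ∀ x : ℕ, (∃ i, c i = x) ↔ (1 ≤ x ∧ x ≤ n ∧ ∀ j, a j ≠ x))
    (hdrange : ∀ x : ℕ, (∃ i, d i = x) ↔ (1 ≤ x ∧ x ≤ n ∧ ∀ j, b j ≠ x))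
    (f : ℤ → ℤ) (hbij : Function.Bijective f)
    (hper : ∀ i : ℤ, f (i + n) = f i + n)
    (hbound : ∀ i : ℤ, i ≤ f i ∧ f i ≤ i + n)
    (hfb : ∀ i, f (b i) = a i + n)
    (hfd : ∀ i, f (d i) = c i)
    (r s : ℕ) (hr : 1 ≤ r) (hrs : r ≤ s) (hs : s ≤ n) :
    ((Finset.univ.filter fun j : Fin k => r ≤ a j ∧ b j ≤ s).card : ℕ) =
      Set.ncard {p : ℤ | p < (s : ℤ) + 1 ∧ (n : ℤ) + r - 1 < f p} := by
  have hinj : Function.Injective (fun j : Fin k => (b j : ℤ)) := by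
    intro i j h
    exact hbmono.injective (Nat.cast_injective h)
  have hSeq : {p : ℤ | p < (s : ℤ) + 1 ∧ (n : ℤ) + r - 1 < f p} =
      (fun j : Fin k => (b j : ℤ)) '' {j : Fin k | r ≤ a j ∧ b j ≤ s} := by
    ext p
    simp only [Set.mem_setOf_eq, Set.mem_image]
    constructor
    · rintro ⟨hps, hfp⟩
      have hfp' : (n : ℤ) + r ≤ f p := by omega
      have hple : p ≤ (s : ℤ) := by omega
      have hp1 : (1 : ℤ) ≤ p := by
        have := (hbound p).2
        omega
      -- p = (x : ℤ) for x := p.toNat, with 1 ≤ x ≤ n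
      obtain ⟨x, rfl⟩ : ∃ x : ℕ, p = (x : ℕ) := ⟨p.toNat, by omega⟩
      have hx1 : 1 ≤ x := by exact_mod_cast hp1
      have hxs : x ≤ s := by exact_mod_cast hple
      have hxn : x ≤ n := le_trans hxs hs
      by_cases hbx : ∃ j, b j = x
      · obtain ⟨j, hj⟩ := hbx
        refine ⟨j, ⟨?_, by omega⟩, by exact_mod_cast hj⟩
        have : f ((b j : ℕ) : ℤ) = (a j : ℤ) + n := hfb j
        rw [hj] at this
        rw [this] at hfp'
        omega
      · push_neg at hbx
        obtain ⟨i, hi⟩ := (hdrange x).2 ⟨hx1, hxn, hbx⟩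
        exfalso
        have hfd' : f ((d i : ℕ) : ℤ) = (c i : ℤ) := hfd i
        rw [hi] at hfd'
        rw [hfd'] at hfp'
        have hc : c i ≤ n := ((hcrange (c i)).1 ⟨i, rfl⟩).2.1
        have : (c i : ℤ) ≤ n := by exact_mod_cast hc
        omega
    · rintro ⟨j, ⟨hra, hbs⟩, rfl⟩
      have := hfb j
      constructor
      · exact_mod_cast by omega
      · rw [this]
        have : (r : ℤ) ≤ a j := by exact_mod_cast hra
        omega
  rw [hSeq, Set.ncard_image_of_injective _ hinj]
  have : {j : Fin k | r ≤ a j ∧ b j ≤ s} =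
      ↑(Finset.univ.filter fun j : Fin k => r ≤ a j ∧ b j ≤ s) := by
    ext j; simp
  rw [this, Set.ncard_coe_finset]
end

section
/- Let M = {[a_1,b_1],...,[a_k,b_k]} be a rank set with b_1 < ... < b_k ≤ n and associated bounded affine permutation f_M. For fixed indices i, j ∈ [k], the interval [a_j, b_j] is contained in [a_i, b_i] if and only if b_j ≤ b_i and f_M(b_j) ≥ f_M(b_i). Consequently, the number of pairs (i,j) with i ≠ j, b_j < b_i, and f_M(b_j) > f_M(b_i) equals ∑_{S ∈ M} (#S(M) - 1), where #S(M) is the number of intervals of M contained in S. -/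
/-- `[a_j,b_j] ⊆ [a_i,b_i]` iff `b_j ≤ b_i` and `f_M (b_j) ≥ f_M (b_i)`;
consequently the inversions of `f_M` among the entries `f_M (b_i)` are counted
by `∑_{S ∈ M} (#S(M) - 1)`. -/
theorem stmt3 (n k : ℕ) (a b : Fin k → ℕ)
    (ha1 : ∀ i, 1 ≤ a i) (hab : ∀ i, a i ≤ b i) (hbn : ∀ i, b i ≤ n)
    (hainj : Function.Injective a) (hbmono : StrictMono b)
    (f : ℤ → ℤ) (hbij : Function.Bijective f)
    (hper : ∀ i : ℤ, f (i + n) = f i + n)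
    (hbound : ∀ i : ℤ, i ≤ f i ∧ f i ≤ i + n)
    (hfb : ∀ i, f (b i) = a i + n) :
    (∀ i j : Fin k, (a i ≤ a j ∧ b j ≤ b i) ↔ ((b j : ℕ) ≤ b i ∧ f (b i) ≤ f (b j))) ∧
    ((Finset.univ.filter fun p : Fin k × Fin k =>
        p.1 ≠ p.2 ∧ b p.2 < b p.1 ∧ f (b p.1) < f (b p.2)).card =
      ∑ i : Fin k,
        ((Finset.univ.filter fun j : Fin k => a i ≤ a j ∧ b j ≤ b i).card - 1)) := by
  have hbinj : Function.Injective b := hbmono.injective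
  have key : ∀ i j : Fin k, (a i ≤ a j ∧ b j ≤ b i) ↔ ((b j : ℕ) ≤ b i ∧ f (b i) ≤ f (b j)) := by
    intro i j
    rw [hfb, hfb]
    omega
  refine ⟨key, ?_⟩
  have hiff : ∀ i j : Fin k, (i ≠ j ∧ b j < b i ∧ f (b i) < f (b j)) ↔
      (j ≠ i ∧ (a i ≤ a j ∧ b j ≤ b i)) := by
    intro i j
    rw [hfb, hfb]
    constructor
    · rintro ⟨hne, h1, h2⟩
      exact ⟨hne.symm, by omega, le_of_lt h1⟩
    · rintro ⟨hne, h1, h2⟩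
      have ha : a i ≠ a j := fun h => hne (hainj h).symm
      have hb : b j ≠ b i := fun h => hne (hbinj h)
      exact ⟨hne.symm, lt_of_le_of_ne h2 hb, by omega⟩
  rw [Finset.card_filter, Fintype.sum_prod_type]
  refine Finset.sum_congr rfl fun i _ => ?_
  rw [← Finset.card_filter]
  have hset : Finset.univ.filter (fun j : Fin k => a i ≤ a j ∧ b j ≤ b i)
      = insert i (Finset.univ.filter fun j : Fin k =>
          (i, j).1 ≠ (i, j).2 ∧ b (i, j).2 < b (i, j).1 ∧ f (b (i, j).1) < f (b (i, j).2)) := by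
    ext j
    simp only [Finset.mem_insert, Finset.mem_filter, Finset.mem_univ, true_and]
    constructor
    · intro h
      by_cases hj : j = i
      · exact Or.inl hj
      · exact Or.inr ((hiff i j).mpr ⟨hj, h⟩)
    · rintro (rfl | h)
      · exact ⟨le_refl _, le_refl _⟩
      · exact ((hiff i j).mp h).2
  rw [hset, Finset.card_insert_of_notMem (by simp)]
  omega
end

section
/- Let M be a rank set with intervals [a_1,b_1],...,[a_k,b_k] ⊆ [n], b_1 < ... < b_k, and let f_M be the associated bounded affine permutation. Then the number of inversions of f_M (pairs i < j in a fundamental domain with f_M(i) > f_M(j), counted modulo the shift equivalence) equals k(n-k) - ∑_{S ∈ M} (#S - #S(M)), where #S = b_i - a_i + 1 for S = [a_i, b_i] and #S(M) is the number of intervals of M contained in S. -/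
/-!
Every `j` with `i < j` and `f j < f i` for some `1 ≤ i ≤ n` satisfies `j ≤ f j < f i ≤ i + n`,
so it is `x` or `x + n` for some `x ∈ [1, n]`, and each of `i`, `x` is either some `b s` or some
`d t`. No inversion starts at `d t`: everything to its right has a larger value than
`f (d t) = c t`. The inversions starting at `b s` end at the `b u` with `[a u, b u]` strictly
containing `[a s, b s]`, at the `d t > b s`, and at the `d t + n` with `c t < a s`. The last two
families are counted through the complements of `b` and `a` in `[1, n]`, and double counting
matches the strictly containing intervals with the strictly contained ones.
-/

open Finset Function

section Partition

variable {α β γ M : Type*} [Fintype α] [Fintype β] [DecidableEq γ] [AddCommMonoid M]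
  {g : α → γ} {h : β → γ} {S : Finset γ}

theorem sum_eq_add_of_range_partition (hg : Injective g) (hh : Injective h) (hgS : ∀ i, g i ∈ S)
    (hrange : ∀ x, (∃ j, h j = x) ↔ x ∈ S ∧ ∀ i, g i ≠ x) (φ : γ → M) :
    ∑ x ∈ S, φ x = ∑ i, φ (g i) + ∑ j, φ (h j) := by
  have hdisj : Disjoint (univ.map ⟨g, hg⟩) (univ.map ⟨h, hh⟩) := by
    simp only [disjoint_left, mem_map, mem_univ, true_and, Embedding.coeFn_mk]
    rintro _ ⟨i, rfl⟩ ⟨j, hj⟩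
    exact ((hrange _).1 ⟨j, hj⟩).2 i rfl
  have hS : S = (univ.map ⟨g, hg⟩).disjUnion (univ.map ⟨h, hh⟩) hdisj := by
    ext x
    simp only [disjUnion_eq_union, mem_union, mem_map, mem_univ, true_and, Embedding.coeFn_mk]
    by_cases hx : ∃ i, g i = x
    · obtain ⟨i, rfl⟩ := hx
      simp [hgS i]
    · push Not at hx
      simp [hrange, hx]
  rw [hS, sum_disjUnion, sum_map, sum_map]
  rfl

theorem card_filter_eq_add_of_range_partition (hg : Injective g) (hh : Injective h)
    (hgS : ∀ i, g i ∈ S) (hrange : ∀ x, (∃ j, h j = x) ↔ x ∈ S ∧ ∀ i, g i ≠ x)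
    (p : γ → Prop) [DecidablePred p] :
    #{x ∈ S | p x} = #{i | p (g i)} + #{j | p (h j)} := by
  simpa only [card_filter] using
    sum_eq_add_of_range_partition hg hh hgS hrange fun x => if p x then 1 else 0

end Partition

section Order

variable {α β γ : Type*} [Fintype α] [LinearOrder β] [LinearOrder γ]

theorem sum_card_filter_swap (r : α → α → Prop) [DecidableRel r] :
    ∑ s, #{t | r t s} = ∑ s, #{t | r s t} := by
  simp only [card_filter]
  exact sum_comm

theorem two_mul_sum_card_filter_lt {g : α → β} (hg : Injective g) :
    2 * ∑ s, #{t | g t < g s} = Fintype.card α * (Fintype.card α - 1) := by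
  classical
  have htri (s : α) : #{t | g t < g s} + #{t | g s < g t} = Fintype.card α - 1 := by
    rw [← card_union_of_disjoint (disjoint_filter.2 fun _ _ h => h.not_gt), ← filter_or,
      ← card_univ, ← card_erase_of_mem (mem_univ s)]
    congr 1
    ext t
    simp [lt_or_lt_iff_ne, hg.ne_iff, eq_comm]
  rw [two_mul]
  nth_rewrite 2 [sum_card_filter_swap fun t s => g t < g s]
  rw [← sum_add_distrib, sum_congr rfl fun s _ => htri s, sum_const, card_univ, smul_eq_mul]

theorem card_filter_le_and_le_eq_card_filter_lt_and_lt_add_one {g : α → β} {h : α → γ}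
    (hg : Injective g) (hh : Injective h) (s : α) :
    #{t | g s ≤ g t ∧ h t ≤ h s} = #{t | g s < g t ∧ h t < h s} + 1 := by
  classical
  rw [← card_insert_of_notMem (s := {t | g s < g t ∧ h t < h s}) (a := s) (by simp)]
  congr 1
  ext t
  simp only [mem_filter, mem_univ, true_and, mem_insert]
  by_cases hts : t = s
  · simp [hts]
  · simp [hts, lt_iff_le_and_ne, hh.ne hts, Ne.symm (hg.ne hts)]

end Order

theorem card_filter_Icc_one_lt (m n : ℕ) : #{x ∈ Icc 1 n | m < x} = n - m := by
  rw [← Nat.card_Ioc]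
  congr 1
  ext x
  simp only [mem_filter, mem_Icc, mem_Ioc]
  omega

theorem card_filter_Icc_one_gt {m n : ℕ} (hm : m ≤ n + 1) : #{x ∈ Icc 1 n | x < m} = m - 1 := by
  rw [← Nat.card_Ico]
  congr 1
  ext x
  simp only [mem_filter, mem_Icc, mem_Ico]
  omega

section PartitionIcc

variable {α β : Type*} [Fintype α] [Fintype β] {n m : ℕ} {g : α → ℕ} {h : β → ℕ}

theorem card_filter_lt_of_range_partition (hg : Injective g) (hh : Injective h)
    (hgS : ∀ i, g i ∈ Icc 1 n) (hrange : ∀ x, (∃ j, h j = x) ↔ x ∈ Icc 1 n ∧ ∀ i, g i ≠ x)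
    (hm : m ≤ n) : (#{j | m < h j} : ℤ) = n - m - #{i | m < g i} := by
  have := card_filter_eq_add_of_range_partition hg hh hgS hrange (m < ·)
  rw [card_filter_Icc_one_lt] at this
  omega

theorem card_filter_gt_of_range_partition (hg : Injective g) (hh : Injective h)
    (hgS : ∀ i, g i ∈ Icc 1 n) (hrange : ∀ x, (∃ j, h j = x) ↔ x ∈ Icc 1 n ∧ ∀ i, g i ≠ x)
    (hm : m ∈ Icc 1 n) : (#{j | h j < m} : ℤ) = m - 1 - #{i | g i < m} := by
  have := card_filter_eq_add_of_range_partition hg hh hgS hrange (· < m)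
  rw [card_filter_Icc_one_gt (by have := (mem_Icc.1 hm).2; omega)] at this
  have := (mem_Icc.1 hm).1
  omega

end PartitionIcc

theorem card_filter_Icc_one_add_self (n : ℕ) (p : ℕ → Prop) [DecidablePred p] :
    #{j ∈ Icc 1 (n + n) | p j} = #{x ∈ Icc 1 n | p x} + #{x ∈ Icc 1 n | p (x + n)} := by
  have hsplit : Icc 1 (n + n) = Icc 1 n ∪ (Icc 1 n).map (addRightEmbedding n) := by
    ext x
    simp only [map_add_right_Icc, mem_union, mem_Icc]
    omega
  rw [hsplit, filter_union, card_union_of_disjoint, filter_map, card_map]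
  · rfl
  · refine disjoint_filter_filter (disjoint_left.2 fun x hx hx' => ?_)
    simp only [map_add_right_Icc, mem_Icc] at hx hx'
    omega

theorem ncard_inversions_eq_sum_card (n : ℕ) {f : ℤ → ℤ} (hbound : ∀ i, i ≤ f i ∧ f i ≤ i + n) :
    {p : ℤ × ℤ | 1 ≤ p.1 ∧ p.1 ≤ n ∧ p.1 < p.2 ∧ f p.2 < f p.1}.ncard =
      ∑ i ∈ Icc 1 n, #{j ∈ Icc 1 (n + n) | (i : ℤ) < (j : ℕ) ∧ f j < f i} := by
  have hset : {p : ℤ × ℤ | 1 ≤ p.1 ∧ p.1 ≤ n ∧ p.1 < p.2 ∧ f p.2 < f p.1} =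
      Prod.map Nat.cast Nat.cast ''
        ↑{q ∈ Icc 1 n ×ˢ Icc 1 (n + n) | (q.1 : ℤ) < q.2 ∧ f q.2 < f q.1} := by
    ext ⟨i, j⟩
    simp only [Set.mem_ofPred_eq, Set.mem_image, coe_filter, mem_product, mem_Icc, Prod.exists,
      Prod.map_apply, Prod.mk.injEq]
    constructor
    · rintro ⟨hi1, hin, hij, hf⟩
      have hjn : j ≤ n + n := by linarith [(hbound j).1, (hbound i).2]
      lift i to ℕ using by omega
      lift j to ℕ using by omega
      exact ⟨i, j, ⟨⟨⟨by omega, by omega⟩, by omega, by omega⟩, hij, hf⟩, rfl, rfl⟩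
    · rintro ⟨i, j, ⟨⟨⟨hi1, hin⟩, -⟩, hij, hf⟩, rfl, rfl⟩
      exact ⟨by exact_mod_cast hi1, by exact_mod_cast hin, hij, hf⟩
  rw [hset, Set.ncard_image_of_injective _ (Nat.cast_injective.prodMap Nat.cast_injective),
    Set.ncard_coe_finset, card_filter, sum_product]
  simp only [card_filter]

section RankSet

variable {ι κ : Type*} {n : ℕ} {a b : ι → ℕ} {c d : κ → ℕ} {f : ℤ → ℤ}

theorem card_inversions_from_d_eq_zero [LinearOrder κ] (hcmono : StrictMono c)
    (hdmono : StrictMono d) (hdrange : ∀ x, (∃ v, d v = x) ↔ x ∈ Icc 1 n ∧ ∀ u, b u ≠ x)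
    (hcn : ∀ v, c v ≤ n)
    (hle : ∀ j, j ≤ f j) (hfb : ∀ u, f (b u) = a u + n) (hfd : ∀ v, f (d v) = c v) (t : κ) :
    #{j ∈ Icc 1 (n + n) | (d t : ℤ) < (j : ℕ) ∧ f j < f (d t)} = 0 := by
  refine card_eq_zero.2 (filter_eq_empty_iff.2 fun j _ ⟨hj, hlt⟩ => ?_)
  rw [hfd] at hlt
  have hjf := hle j
  have hct := hcn t
  by_cases hb : ∃ u, b u = j
  · obtain ⟨u, rfl⟩ := hb
    rw [hfb] at hlt
    omega
  · push Not at hb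
    obtain ⟨v, rfl⟩ := (hdrange j).2 ⟨mem_Icc.2 ⟨by omega, by omega⟩, hb⟩
    rw [hfd] at hlt
    have := hcmono (hdmono.lt_iff_lt.1 (by exact_mod_cast hj))
    omega

theorem card_inversions_from_b [Fintype ι] [Fintype κ] (hb : Injective b) (hd : Injective d)
    (hbS : ∀ u, b u ∈ Icc 1 n) (hdrange : ∀ x, (∃ v, d v = x) ↔ x ∈ Icc 1 n ∧ ∀ u, b u ≠ x)
    (ha1 : ∀ u, 1 ≤ a u) (hab : ∀ u, a u ≤ b u) (hcn : ∀ v, c v ≤ n)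
    (hper : ∀ i : ℤ, f (i + n) = f i + n)
    (hfb : ∀ u, f (b u) = a u + n) (hfd : ∀ v, f (d v) = c v) (s : ι) :
    #{j ∈ Icc 1 (n + n) | (b s : ℤ) < (j : ℕ) ∧ f j < f (b s)} =
      #{u | a u < a s ∧ b s < b u} + #{v | b s < d v} + #{v | c v < a s} := by
  have hs := mem_Icc.1 (hbS s)
  have hd1 (v : κ) : 1 ≤ d v := (mem_Icc.1 ((hdrange _).1 ⟨v, rfl⟩).1).1
  rw [card_filter_Icc_one_add_self, card_filter_eq_add_of_range_partition hb hd hbS hdrange,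
    card_filter_eq_add_of_range_partition hb hd hbS hdrange]
  have hd_lt (v : κ) : (b s : ℤ) < d v + n := by have := hd1 v; omega
  have hc_lt (v : κ) : (c v : ℤ) < a s + n := by have := hcn v; have := ha1 s; omega
  have hb_not_lt (u : ι) : ¬ ((a u : ℤ) + n + n < a s + n) := by
    have := ha1 u; have := hab s; omega
  simp only [Nat.cast_add, hper, hfb, hfd, hd_lt, hc_lt, hb_not_lt, add_lt_add_iff_right,
    Nat.cast_lt, true_and, and_false, filter_false, card_empty, zero_add, and_comm (a := b s < _)]

theorem ncard_inversions_eq_sum_card_from_b [Fintype ι] [Fintype κ] [LinearOrder κ]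
    (hb : Injective b) (hcmono : StrictMono c) (hdmono : StrictMono d) (hbS : ∀ u, b u ∈ Icc 1 n)
    (hdrange : ∀ x, (∃ v, d v = x) ↔ x ∈ Icc 1 n ∧ ∀ u, b u ≠ x)
    (ha1 : ∀ u, 1 ≤ a u) (hab : ∀ u, a u ≤ b u) (hcn : ∀ v, c v ≤ n)
    (hper : ∀ i : ℤ, f (i + n) = f i + n) (hbound : ∀ i : ℤ, i ≤ f i ∧ f i ≤ i + n)
    (hfb : ∀ u, f (b u) = a u + n) (hfd : ∀ v, f (d v) = c v) :
    {p : ℤ × ℤ | 1 ≤ p.1 ∧ p.1 ≤ n ∧ p.1 < p.2 ∧ f p.2 < f p.1}.ncard =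
      ∑ s, (#{u | a u < a s ∧ b s < b u} + #{v | b s < d v} + #{v | c v < a s}) := by
  rw [ncard_inversions_eq_sum_card n hbound,
    sum_eq_add_of_range_partition hb hdmono.injective hbS hdrange,
    sum_eq_zero fun t _ => card_inversions_from_d_eq_zero hcmono hdmono hdrange hcn
      (fun j => (hbound j).1) hfb hfd t, add_zero]
  exact sum_congr rfl fun s _ =>
    card_inversions_from_b hb hdmono.injective hbS hdrange ha1 hab hcn hper hfb hfd s

end RankSet

theorem stmt5_general (n k : ℕ) (a b : Fin k → ℕ)
    (ha1 : ∀ i, 1 ≤ a i) (hab : ∀ i, a i ≤ b i) (hbn : ∀ i, b i ≤ n)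
    (hainj : Function.Injective a) (hbmono : StrictMono b)
    (c d : Fin (n - k) → ℕ)
    (hcmono : StrictMono c) (hdmono : StrictMono d)
    (hcrange : ∀ x : ℕ, (∃ i, c i = x) ↔ (1 ≤ x ∧ x ≤ n ∧ ∀ j, a j ≠ x))
    (hdrange : ∀ x : ℕ, (∃ i, d i = x) ↔ (1 ≤ x ∧ x ≤ n ∧ ∀ j, b j ≠ x))
    (f : ℤ → ℤ)
    (hper : ∀ i : ℤ, f (i + n) = f i + n)
    (hbound : ∀ i : ℤ, i ≤ f i ∧ f i ≤ i + n)
    (hfb : ∀ i, f (b i) = a i + n)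
    (hfd : ∀ i, f (d i) = c i) :
    (Set.ncard {p : ℤ × ℤ | 1 ≤ p.1 ∧ p.1 ≤ (n : ℤ) ∧ p.1 < p.2 ∧ f p.2 < f p.1} : ℤ) =
      (k : ℤ) * ((n : ℤ) - k) -
        ∑ i : Fin k,
          (((b i : ℤ) - (a i : ℤ) + 1) -
            ((Finset.univ.filter fun j : Fin k => a i ≤ a j ∧ b j ≤ b i).card : ℤ)) := by
  have hcn (t) : c t ≤ n := ((hcrange _).1 ⟨t, rfl⟩).2.1
  have haS (s) : a s ∈ Icc 1 n := mem_Icc.2 ⟨ha1 s, (hab s).trans (hbn s)⟩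
  have hbS (s) : b s ∈ Icc 1 n := mem_Icc.2 ⟨(ha1 s).trans (hab s), hbn s⟩
  have hcrange' : ∀ x, (∃ t, c t = x) ↔ x ∈ Icc 1 n ∧ ∀ s, a s ≠ x := by
    simpa only [mem_Icc, and_assoc] using hcrange
  have hdrange' : ∀ x, (∃ t, d t = x) ↔ x ∈ Icc 1 n ∧ ∀ s, b s ≠ x := by
    simpa only [mem_Icc, and_assoc] using hdrange
  have hd_gt (s) := card_filter_lt_of_range_partition hbmono.injective hdmono.injective hbS
    hdrange' (hbn s)
  have hc_lt (s) := card_filter_gt_of_range_partition hainj hcmono.injective haS hcrange' (haS s)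
  have hpairs {g : Fin k → ℕ} (hg : Injective g) : 2 * ∑ s, (#{t | g t < g s} : ℤ) = k * k - k := by
    rw [← Nat.cast_mul, ← Nat.cast_sub (Nat.le_mul_self k), ← Nat.mul_sub_one]
    exact_mod_cast Fintype.card_fin k ▸ two_mul_sum_card_filter_lt hg
  have hb_pairs := hpairs hbmono.injective
  rw [← Nat.cast_sum, sum_card_filter_swap fun t s => b t < b s, Nat.cast_sum] at hb_pairs
  have hnested : ∑ s, (#{t | a t < a s ∧ b s < b t} : ℤ) = ∑ s, (#{t | a s < a t ∧ b t < b s} : ℤ) := by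
    exact_mod_cast sum_card_filter_swap fun t s => a t < a s ∧ b s < b t
  rw [ncard_inversions_eq_sum_card_from_b hbmono.injective hcmono hdmono hbS hdrange' ha1 hab hcn
    hper hbound hfb hfd]
  simp only [card_filter_le_and_le_eq_card_filter_lt_and_lt_add_one hainj hbmono.injective]
  push_cast
  simp only [hd_gt, hc_lt, sum_add_distrib, sum_sub_distrib, sum_const, card_univ,
    Fintype.card_fin, nsmul_eq_mul]
  linarith [hpairs hainj]

/-- The number of inversions of the affine permutation `f_M` of a rank set `M`
equals `k(n-k) - ∑_{S ∈ M} (#S - #S(M))`. -/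
theorem stmt5 (n k : ℕ) (a b : Fin k → ℕ)
    (ha1 : ∀ i, 1 ≤ a i) (hab : ∀ i, a i ≤ b i) (hbn : ∀ i, b i ≤ n)
    (hainj : Function.Injective a) (hbmono : StrictMono b)
    (c d : Fin (n - k) → ℕ)
    (hcmono : StrictMono c) (hdmono : StrictMono d)
    (hcrange : ∀ x : ℕ, (∃ i, c i = x) ↔ (1 ≤ x ∧ x ≤ n ∧ ∀ j, a j ≠ x))
    (hdrange : ∀ x : ℕ, (∃ i, d i = x) ↔ (1 ≤ x ∧ x ≤ n ∧ ∀ j, b j ≠ x))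
    (f : ℤ → ℤ) (hbij : Function.Bijective f)
    (hper : ∀ i : ℤ, f (i + n) = f i + n)
    (hbound : ∀ i : ℤ, i ≤ f i ∧ f i ≤ i + n)
    (hfb : ∀ i, f (b i) = a i + n)
    (hfd : ∀ i, f (d i) = c i) :
    (Set.ncard {p : ℤ × ℤ | 1 ≤ p.1 ∧ p.1 ≤ (n : ℤ) ∧ p.1 < p.2 ∧ f p.2 < f p.1} : ℤ) =
      (k : ℤ) * ((n : ℤ) - k) -
        ∑ i : Fin k,
          (((b i : ℤ) - (a i : ℤ) + 1) -
            ((Finset.univ.filter fun j : Fin k => a i ≤ a j ∧ b j ≤ b i).card : ℤ)) :=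
  stmt5_general n k a b ha1 hab hbn hainj hbmono c d hcmono hdmono hcrange hdrange f hper hbound hfb
    hfd
end

section
/- Let M be a stretched rank set contained in [n] (i.e., min(S) < max(T) for all S, T ∈ M), with associated bounded affine permutation f_M. Let b be minimal such that [a,b] ∈ M for some a, and set y = f_M(b-1). Then f_M maps the window [b-1, n+b-2] into the interval [y, y+n-1]; in particular, the map i ↦ f_M(b-2+i) - y + 1 is a permutation of [n]. -/
/-- For a stretched rank set `M`, with `b₁` the minimal right endpoint and
`y = f_M(b₁ - 1)`, the affine permutation `f_M` maps the window
`[b₁-1, n+b₁-2]` into `[y, y+n-1]`; in particular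
`i ↦ f_M(b₁-2+i) - y + 1` is a permutation of `[n]`. -/
theorem stmt6 (n k : ℕ) (hk : 0 < k) (a b : Fin k → ℕ)
    (ha1 : ∀ i, 1 ≤ a i) (hab : ∀ i, a i ≤ b i) (hbn : ∀ i, b i ≤ n)
    (hainj : Function.Injective a) (hbmono : StrictMono b)
    (hstretched : ∀ i j : Fin k, a i < b j)
    (c d : Fin (n - k) → ℕ)
    (hcmono : StrictMono c) (hdmono : StrictMono d)
    (hcrange : ∀ x : ℕ, (∃ i, c i = x) ↔ (1 ≤ x ∧ x ≤ n ∧ ∀ j, a j ≠ x))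
    (hdrange : ∀ x : ℕ, (∃ i, d i = x) ↔ (1 ≤ x ∧ x ≤ n ∧ ∀ j, b j ≠ x))
    (f : ℤ → ℤ) (hbij : Function.Bijective f)
    (hper : ∀ i : ℤ, f (i + n) = f i + n)
    (hbound : ∀ i : ℤ, i ≤ f i ∧ f i ≤ i + n)
    (hfb : ∀ i, f (b i) = a i + n)
    (hfd : ∀ i, f (d i) = c i) :
    (∀ i : ℤ, (b ⟨0, hk⟩ : ℤ) - 1 ≤ i → i ≤ (n : ℤ) + b ⟨0, hk⟩ - 2 →
      f ((b ⟨0, hk⟩ : ℤ) - 1) ≤ f i ∧ f i ≤ f ((b ⟨0, hk⟩ : ℤ) - 1) + n - 1) ∧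
    Set.BijOn (fun i : ℤ => f ((b ⟨0, hk⟩ : ℤ) - 2 + i) - f ((b ⟨0, hk⟩ : ℤ) - 1) + 1)
      (Set.Icc 1 (n : ℤ)) (Set.Icc 1 (n : ℤ)) := by
  set B : ℕ := b ⟨0, hk⟩ with hBdef
  have hB2 : 2 ≤ B := by
    have h1 := ha1 ⟨0, hk⟩
    have h2 := hstretched ⟨0, hk⟩ ⟨0, hk⟩
    omega
  have hBn : B ≤ n := hbn _
  have hb0le : ∀ j, B ≤ b j := fun j => hbmono.monotone (Fin.le_def.mpr (Nat.zero_le _))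
  obtain ⟨j₀, hj₀⟩ : ∃ j, d j = B - 1 := by
    rw [hdrange]
    exact ⟨by omega, by omega, fun j => by have := hb0le j; omega⟩
  set y : ℕ := c j₀ with hydef
  obtain ⟨hy1, hyn, hya⟩ := (hcrange y).mp ⟨j₀, rfl⟩
  have hfB1 : f ((B : ℤ) - 1) = y := by
    have := hfd j₀
    rw [hj₀] at this
    rwa [show (((B - 1 : ℕ)) : ℤ) = (B : ℤ) - 1 by omega] at this
  have hmy : (B : ℤ) - 1 ≤ (y : ℤ) := by
    have := (hbound ((B : ℤ) - 1)).1
    rwa [hfB1] at this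
  have key : ∀ i : ℤ, (B : ℤ) - 1 ≤ i → i ≤ (B : ℤ) - 1 + n - 1 →
      (y : ℤ) ≤ f i ∧ f i ≤ (y : ℤ) + n - 1 := by
    intro i h1 h2
    by_cases hi : i ≤ (n : ℤ)
    · set x : ℕ := i.toNat with hxdef
      have hxi : (x : ℤ) = i := Int.toNat_of_nonneg (by omega)
      by_cases hbx : ∃ j, b j = x
      · obtain ⟨j, hj⟩ := hbx
        have hfi : f i = (a j : ℤ) + n := by
          rw [← hxi, ← hj]; exact hfb j
        have hay : a j < y := by
          have h3 : a j < B := hstretched j ⟨0, hk⟩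
          have h4 := hya j
          omega
        constructor <;> push_cast [hfi] <;> omega
      · push_neg at hbx
        obtain ⟨j, hj⟩ := (hdrange x).mpr ⟨by omega, by omega, hbx⟩
        have hfi : f i = (c j : ℤ) := by
          rw [← hxi, ← hj]; exact hfd j
        have hj0j : j₀ ≤ j := by
          by_contra hlt
          have := hdmono (lt_of_not_ge hlt)
          omega
        have hcc : y ≤ c j := hcmono.monotone hj0j
        obtain ⟨-, hcn, -⟩ := (hcrange (c j)).mp ⟨j, rfl⟩
        constructor <;> push_cast [hfi] <;> omega
    · set x : ℕ := (i - n).toNat with hxdef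
      have hxi : (x : ℤ) = i - n := Int.toNat_of_nonneg (by omega)
      have hx2 : x ≤ B - 2 := by omega
      obtain ⟨j, hj⟩ := (hdrange x).mpr ⟨by omega, by omega,
        fun j => by have := hb0le j; omega⟩
      have hfi : f i = (c j : ℤ) + n := by
        have : f ((x : ℤ) + n) = f x + n := hper x
        rw [hxi] at this
        rw [show i - (n:ℤ) + n = i by ring] at this
        rw [this, ← hxi, ← hj, hfd j]
      have hjlt : j < j₀ := by
        by_contra hge
        have := hdmono.monotone (le_of_not_gt hge)
        omega
      have hcc : c j < y := hcmono hjlt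
      constructor <;> push_cast [hfi] <;> omega
  refine ⟨fun i h1 h2 => by rw [hfB1]; exact key i h1 (by omega), ?_⟩
  have hmaps : Set.MapsTo (fun i : ℤ => f ((B : ℤ) - 2 + i) - f ((B : ℤ) - 1) + 1)
      (Set.Icc 1 (n : ℤ)) (Set.Icc 1 (n : ℤ)) := by
    intro i hi
    simp only [Set.mem_Icc] at hi ⊢
    obtain ⟨k1, k2⟩ := key ((B : ℤ) - 2 + i) (by omega) (by omega)
    rw [hfB1]
    omega
  rw [← Set.Finite.injOn_iff_bijOn_of_mapsTo (Set.finite_Icc _ _) hmaps]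
  intro i hi j hj hij
  simp only at hij
  have : f ((B : ℤ) - 2 + i) = f ((B : ℤ) - 2 + j) := by omega
  have := hbij.1 this
  omega
end

section
/- Let w ∈ S_n. Define the diagram DM(w) = {(i,j) : 1 ≤ i ≤ n, w(i) ≤ j ≤ i+n} ⊆ [n] × [2n], and let C_w DM(w) be the result of applying C_{n+1→w(1)}, C_{n+2→w(2)}, ..., C_{2n→w(n)} (in composition order C_{n+1→w(1)} ∘ ... ∘ C_{2n→w(n)}) to DM(w). Then for j ≤ n: (i,j) ∈ C_w DM(w) if and only if (i,j) ∉ D(w), where D(w) = {(i, w(j)) : i < j, w(i) > w(j)} is the Rothe diagram of w. -/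
/-- The diagram operator `C_{i→j}`: in each row, the entry in column `i` is
moved to column `j` whenever column `j` of that row is empty. -/
def Cmove (i j : ℕ) (D : Set (ℕ × ℕ)) : Set (ℕ × ℕ) :=
  {pq | if pq.2 = j then ((pq.1, j) ∈ D ∨ ((pq.1, i) ∈ D ∧ (pq.1, j) ∉ D))
        else if pq.2 = i then ((pq.1, i) ∈ D ∧ (pq.1, j) ∈ D)
        else pq ∈ D}

/-- `CwAux w n t D` applies `C_{n+1→w(1)} ∘ ⋯ ∘ C_{n+t→w(t)}` to `D`
(so `C_{n+t→w(t)}` is applied first). -/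
def CwAux (w : ℕ → ℕ) (n : ℕ) : ℕ → Set (ℕ × ℕ) → Set (ℕ × ℕ)
  | 0, D => D
  | t + 1, D => CwAux w n t (Cmove (n + t + 1) (w (t + 1)) D)

/-- Closed form for the state after applying the moves for `s = t+1, …, n`. -/
def Estate (w : ℕ → ℕ) (n t : ℕ) : Set (ℕ × ℕ) :=
  {p | 1 ≤ p.1 ∧ p.1 ≤ n ∧ (
    (p.2 ≤ n ∧ (w p.1 ≤ p.2 ∨ ∃ s, t < s ∧ s ≤ n ∧ w s = p.2 ∧ s ≤ p.1)) ∨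
    (n < p.2 ∧ p.2 ≤ n + t ∧ p.2 ≤ p.1 + n) ∨
    (n + t < p.2 ∧ p.2 ≤ 2*n ∧ p.2 ≤ p.1 + n ∧ w p.1 ≤ w (p.2 - n)))}

lemma memE_low {w : ℕ → ℕ} {n t p c : ℕ} (hc : c ≤ n) :
    ((p, c) ∈ Estate w n t ↔
      (1 ≤ p ∧ p ≤ n ∧ (w p ≤ c ∨ ∃ s, t < s ∧ s ≤ n ∧ w s = c ∧ s ≤ p))) := by
  simp only [Estate, Set.mem_setOf_eq]
  constructor
  · rintro ⟨h1, h2, (⟨-, h⟩ | ⟨h3, -⟩ | ⟨h3, -⟩)⟩ <;> first | exact ⟨h1, h2, h⟩ | omega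
  · rintro ⟨h1, h2, h⟩; exact ⟨h1, h2, Or.inl ⟨hc, h⟩⟩

lemma memE_mid {w : ℕ → ℕ} {n t p c : ℕ} (hc1 : n < c) (hc2 : c ≤ n + t) :
    ((p, c) ∈ Estate w n t ↔ (1 ≤ p ∧ p ≤ n ∧ c ≤ p + n)) := by
  simp only [Estate, Set.mem_setOf_eq]
  constructor
  · rintro ⟨h1, h2, (⟨h, -⟩ | ⟨-, -, h⟩ | ⟨h3, -⟩)⟩ <;> first | exact ⟨h1, h2, h⟩ | omega
  · rintro ⟨h1, h2, h⟩; exact ⟨h1, h2, Or.inr (Or.inl ⟨hc1, hc2, h⟩)⟩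

lemma memE_high {w : ℕ → ℕ} {n t p c : ℕ} (hc1 : n + t < c) :
    ((p, c) ∈ Estate w n t ↔
      (1 ≤ p ∧ p ≤ n ∧ c ≤ 2*n ∧ c ≤ p + n ∧ w p ≤ w (c - n))) := by
  simp only [Estate, Set.mem_setOf_eq]
  constructor
  · rintro ⟨h1, h2, (⟨h, -⟩ | ⟨-, h, -⟩ | ⟨-, h⟩)⟩ <;> first | exact ⟨h1, h2, h⟩ | omega
  · rintro ⟨h1, h2, h⟩; exact ⟨h1, h2, Or.inr (Or.inr ⟨hc1, h⟩)⟩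

lemma cwExistsEq {n t : ℕ} {w : ℕ → ℕ} (hinj : Set.InjOn w (Set.Icc 1 n))
    (ht : t < n) (p : ℕ) :
    (∃ s, t < s ∧ s ≤ n ∧ w s = w (t+1) ∧ s ≤ p) ↔ t + 1 ≤ p := by
  constructor
  · rintro ⟨s, hs1, hs2, hs3, hs4⟩
    have : s = t + 1 := hinj (Set.mem_Icc.mpr ⟨by omega, hs2⟩)
      (Set.mem_Icc.mpr ⟨by omega, by omega⟩) hs3
    omega
  · intro h; exact ⟨t+1, by omega, by omega, rfl, h⟩

lemma cwExistsNone {n t : ℕ} {w : ℕ → ℕ} (hinj : Set.InjOn w (Set.Icc 1 n))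
    (ht : t < n) (p : ℕ) :
    ¬ (∃ s, t + 1 < s ∧ s ≤ n ∧ w s = w (t+1) ∧ s ≤ p) := by
  rintro ⟨s, hs1, hs2, hs3, hs4⟩
  have : s = t + 1 := hinj (Set.mem_Icc.mpr ⟨by omega, hs2⟩)
    (Set.mem_Icc.mpr ⟨by omega, by omega⟩) hs3
  omega

lemma exists_shift {n t c : ℕ} {w : ℕ → ℕ} (hc : c ≠ w (t+1)) (p : ℕ) :
    ((∃ s, t + 1 < s ∧ s ≤ n ∧ w s = c ∧ s ≤ p) ↔
     (∃ s, t < s ∧ s ≤ n ∧ w s = c ∧ s ≤ p)) := by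
  constructor
  · rintro ⟨s, hs1, hs2, hs3, hs4⟩; exact ⟨s, by omega, hs2, hs3, hs4⟩
  · rintro ⟨s, hs1, hs2, hs3, hs4⟩
    rcases eq_or_ne s (t+1) with rfl | hne
    · exact absurd hs3.symm hc
    · exact ⟨s, by omega, hs2, hs3, hs4⟩

lemma step (n : ℕ) (w : ℕ → ℕ) (hw : Set.BijOn w (Set.Icc 1 n) (Set.Icc 1 n))
    (t : ℕ) (ht : t < n) :
    Cmove (n + t + 1) (w (t + 1)) (Estate w n (t+1)) = Estate w n t := by
  have hinj := hw.injOn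
  have hj : 1 ≤ w (t+1) ∧ w (t+1) ≤ n := by
    have hmem : t + 1 ∈ Set.Icc 1 n := Set.mem_Icc.mpr ⟨by omega, by omega⟩
    exact Set.mem_Icc.mp (hw.mapsTo hmem)
  ext ⟨p, c⟩
  simp only [Cmove, Set.mem_setOf_eq]
  by_cases hc1 : c = w (t+1)
  · subst hc1
    rw [if_pos rfl]
    rw [memE_low hj.2, memE_low hj.2,
        memE_mid (t := t+1) (by omega) (by omega)]
    simp only [cwExistsEq hinj ht, fun p => (cwExistsNone hinj ht p)]
    constructor
    · rintro (⟨h1, h2, (h | ⟨s, -, -, -, -⟩)⟩ | ⟨⟨h1, h2, h3⟩, h4⟩)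
      · exact ⟨h1, h2, Or.inl h⟩
      · exact ⟨h1, h2, Or.inr (by omega)⟩
    · rintro ⟨h1, h2, (h | h)⟩
      · exact Or.inl ⟨h1, h2, Or.inl h⟩
      · by_cases hw' : w p ≤ w (t+1)
        · exact Or.inl ⟨h1, h2, Or.inl hw'⟩
        · refine Or.inr ⟨⟨h1, h2, by omega⟩, ?_⟩
          rintro ⟨-, -, (h' | ⟨s, -, -, -, -⟩)⟩ <;> omega
  · rw [if_neg hc1]
    by_cases hc2 : c = n + t + 1
    · subst hc2
      rw [if_pos rfl]
      rw [memE_mid (t := t+1) (by omega) (by omega), memE_low hj.2,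
          memE_high (t := t) (by omega)]
      have hsub : n + t + 1 - n = t + 1 := by omega
      rw [hsub]
      constructor
      · rintro ⟨⟨h1, h2, h3⟩, ⟨-, -, (h | h)⟩⟩
        · exact ⟨h1, h2, by omega, h3, h⟩
        · exact absurd h (cwExistsNone hinj ht p)
      · rintro ⟨h1, h2, h3, h4, h5⟩
        exact ⟨⟨h1, h2, h4⟩, ⟨h1, h2, Or.inl h5⟩⟩
    · rw [if_neg hc2]
      rcases le_or_gt c n with hcn | hcn
      · rw [memE_low hcn, memE_low hcn, exists_shift hc1]
      · rcases le_or_gt c (n + t) with hct | hct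
        · rw [memE_mid hcn hct, memE_mid hcn (by omega)]
        · rw [memE_high (t := t) hct, memE_high (t := t+1) (by omega)]

lemma loop (n : ℕ) (w : ℕ → ℕ) (hw : Set.BijOn w (Set.Icc 1 n) (Set.Icc 1 n)) :
    ∀ t, t ≤ n → CwAux w n t (Estate w n t) = Estate w n 0 := by
  intro t
  induction t with
  | zero => intro _; rfl
  | succ t ih =>
    intro h
    show CwAux w n t (Cmove (n + t + 1) (w (t + 1)) (Estate w n (t+1))) = _
    rw [step n w hw t (by omega)]
    exact ih (by omega)

lemma estate_top (n : ℕ) (w : ℕ → ℕ)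
    (hw : Set.BijOn w (Set.Icc 1 n) (Set.Icc 1 n)) :
    Estate w n n = {p : ℕ × ℕ | 1 ≤ p.1 ∧ p.1 ≤ n ∧ w p.1 ≤ p.2 ∧ p.2 ≤ p.1 + n} := by
  ext ⟨p, c⟩
  simp only [Estate, Set.mem_setOf_eq]
  constructor
  · rintro ⟨h1, h2, h⟩
    have hwp : 1 ≤ w p ∧ w p ≤ n :=
      Set.mem_Icc.mp (hw.mapsTo (Set.mem_Icc.mpr ⟨h1, h2⟩))
    rcases h with ⟨hc, (h | ⟨s, hs⟩)⟩ | ⟨h3, h4, h5⟩ | ⟨h3, h4, -⟩ <;>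
      exact ⟨h1, h2, by omega, by omega⟩
  · rintro ⟨h1, h2, h3, h4⟩
    have hwp : 1 ≤ w p ∧ w p ≤ n :=
      Set.mem_Icc.mp (hw.mapsTo (Set.mem_Icc.mpr ⟨h1, h2⟩))
    rcases le_or_gt c n with hc | hc
    · exact ⟨h1, h2, Or.inl ⟨hc, Or.inl h3⟩⟩
    · exact ⟨h1, h2, Or.inr (Or.inl ⟨hc, by omega, h4⟩)⟩

/-- For `j ≤ n` and `i ∈ [n]`, `(i,j) ∈ C_w DM(w)` iff `(i,j)` is not in the
Rothe diagram `D(w)`, where `DM(w) = {(i,j) : 1 ≤ i ≤ n, w(i) ≤ j ≤ i + n}` and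
`C_w = C_{n+1→w(1)} ∘ ⋯ ∘ C_{2n→w(n)}`. -/
theorem stmt11 (n : ℕ) (hn : 1 ≤ n) (w : ℕ → ℕ)
    (hw : Set.BijOn w (Set.Icc 1 n) (Set.Icc 1 n)) :
    ∀ i j : ℕ, 1 ≤ i → i ≤ n → 1 ≤ j → j ≤ n →
      ((i, j) ∈ CwAux w n n
          {p : ℕ × ℕ | 1 ≤ p.1 ∧ p.1 ≤ n ∧ w p.1 ≤ p.2 ∧ p.2 ≤ p.1 + n} ↔
        (i, j) ∉ {p : ℕ × ℕ | ∃ q r : ℕ, 1 ≤ q ∧ q < r ∧ r ≤ n ∧ w r < w q ∧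
          p = (q, w r)}) := by
  intro i j hi1 hi2 hj1 hj2
  rw [← estate_top n w hw, loop n w hw n le_rfl, memE_low hj2]
  have hinj := hw.injOn
  constructor
  · rintro ⟨-, -, h⟩ ⟨q, r, hq1, hqr, hr, hlt, heq⟩
    simp only [Set.mem_setOf_eq, Prod.mk.injEq] at heq
    obtain ⟨rfl, rfl⟩ := heq
    rcases h with h | ⟨s, hs0, hsn, hsw, hsi⟩
    · omega
    · have : s = r := hinj (Set.mem_Icc.mpr ⟨by omega, hsn⟩)
        (Set.mem_Icc.mpr ⟨by omega, hr⟩) hsw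
      omega
  · intro h
    refine ⟨hi1, hi2, ?_⟩
    obtain ⟨r0, hr0mem, hr0⟩ := hw.surjOn (Set.mem_Icc.mpr ⟨hj1, hj2⟩)
    rw [Set.mem_Icc] at hr0mem
    rcases le_or_gt r0 i with hle | hlt
    · exact Or.inr ⟨r0, by omega, hr0mem.2, hr0, hle⟩
    · left
      by_contra hwi
      exact h ⟨i, r0, hi1, hlt, hr0mem.2, by omega, by rw [hr0]⟩
end

section
/- Let f : ℤ → ℤ be a bounded affine permutation in Bound(k,n), i.e. f(i+n) = f(i)+n and i ≤ f(i) ≤ i+n for all i, with (1/n)∑_{i=1}^n (f(i)-i) = k. Suppose further that the subsequence of (f(1), ..., f(n)) consisting of entries lying in [n] is increasing. Define b_1 < ... < b_k as the i ∈ [n] with f(i) > n, a_i = f(b_i) - n, and M = {[a_1,b_1],...,[a_k,b_k]}. Then M is a rank set with all b_i ≤ n, and the associated affine permutation f_M equals f. This gives a bijection between such bounded affine permutations and rank sets for Gr(k,n). -/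
/-!
Since `x - n ≤ f⁻¹ x ≤ x`, every `x ∈ [n]` has its `f`-preimage either in the window `[n]`
(then `f` maps a non-`b` position to `x ≤ n`) or in `[1 - n, 0]` (then, by periodicity,
`x = f (b_j) - n = a_j` for some `j`), and never both, by injectivity. Hence `f` maps the
complement `d` of the `b`'s onto the complement `c` of the `a`'s, and it does so increasingly
by hypothesis, so `f ∘ d = c`.
-/

section Enumeration

variable {ι α : Type*} {e : ι → α} {Q : α → Prop}

lemma forall_apply_iff_of_range (he : ∀ x, (∃ i, e i = x) ↔ Q x) (P : α → Prop) :
    (∀ i, P (e i)) ↔ ∀ x, Q x → P x := by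
  simp only [← he, forall_exists_index, forall_apply_eq_imp_iff]

lemma exists_apply_iff_of_range (he : ∀ x, (∃ i, e i = x) ↔ Q x) (P : α → Prop) :
    (∃ i, P (e i)) ↔ ∃ x, Q x ∧ P x := by
  simp only [← he, exists_exists_eq_and]

end Enumeration

namespace BoundedAffinePerm

variable {n : ℕ} {f : ℤ → ℤ}

lemma apply_sub (hper : ∀ i : ℤ, f (i + n) = f i + n) (i : ℤ) : f (i - n) = f i - n := by
  have h := hper (i - n)
  rw [sub_add_cancel] at h
  linarith

lemma mem_image_window_iff (hbij : Function.Bijective f)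
    (hper : ∀ i : ℤ, f (i + n) = f i + n) (hbound : ∀ i : ℤ, i ≤ f i ∧ f i ≤ i + n)
    (x : ℤ) :
    (∃ y : ℤ, (1 ≤ y ∧ y ≤ n ∧ f y ≤ n) ∧ f y = x) ↔
      1 ≤ x ∧ x ≤ n ∧ ∀ z : ℤ, (1 ≤ z ∧ z ≤ n ∧ (n : ℤ) < f z) → f z - n ≠ x := by
  constructor
  · rintro ⟨y, ⟨hy1, hyn, hfy⟩, rfl⟩
    refine ⟨(hbound y).1.trans' hy1, hfy, fun z ⟨_, hzn, _⟩ hz => ?_⟩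
    rw [← apply_sub hper] at hz
    have := hbij.injective hz
    omega
  · rintro ⟨hx1, hxn, hnot⟩
    obtain ⟨y, rfl⟩ := hbij.surjective x
    obtain ⟨hy, hy'⟩ := hbound y
    rcases le_or_gt 1 y with hy1 | hy1
    · exact ⟨y, ⟨hy1, hy.trans hxn, hxn⟩, rfl⟩
    · refine absurd ?_ (hnot (y + n) ⟨by omega, by omega, by rw [hper]; omega⟩)
      rw [hper, add_sub_cancel_right]

end BoundedAffinePerm

open BoundedAffinePerm in
theorem stmt17_general (n k : ℕ)
    (f : ℤ → ℤ) (hbij : Function.Bijective f)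
    (hper : ∀ i : ℤ, f (i + n) = f i + n)
    (hbound : ∀ i : ℤ, i ≤ f i ∧ f i ≤ i + n)
    (hincr : ∀ i j : ℤ, 1 ≤ i → i < j → j ≤ n → f i ≤ n → f j ≤ n → f i < f j)
    (b : Fin k → ℤ) (hbmono : StrictMono b)
    (hbrange : ∀ x : ℤ, (∃ i, b i = x) ↔ (1 ≤ x ∧ x ≤ n ∧ (n : ℤ) < f x))
    (c d : Fin (n - k) → ℤ)
    (hcmono : StrictMono c) (hdmono : StrictMono d)
    (hcrange : ∀ x : ℤ, (∃ i, c i = x) ↔ (1 ≤ x ∧ x ≤ n ∧ ∀ j, f (b j) - n ≠ x))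
    (hdrange : ∀ x : ℤ, (∃ i, d i = x) ↔ (1 ≤ x ∧ x ≤ n ∧ ∀ j, b j ≠ x)) :
    (∀ i : Fin k, 1 ≤ f (b i) - n ∧ f (b i) - n ≤ b i ∧ b i ≤ n) ∧
    Function.Injective (fun i : Fin k => f (b i) - n) ∧
    Function.Injective b ∧
    (∀ i : Fin (n - k), f (d i) = c i) := by
  have hb (i : Fin k) := (hbrange (b i)).1 ⟨i, rfl⟩
  have hd (x : ℤ) : (∃ i, d i = x) ↔ 1 ≤ x ∧ x ≤ n ∧ f x ≤ n := by
    simp only [hdrange, ← not_exists, hbrange]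
    omega
  have hfd (i : Fin (n - k)) := (hd (d i)).1 ⟨i, rfl⟩
  have hfd_mono : StrictMono (f ∘ d) := fun i j hij =>
    hincr _ _ (hfd i).1 (hdmono hij) (hfd j).2.1 (hfd i).2.2 (hfd j).2.2
  have hfd_range : Set.range (f ∘ d) = Set.range c := by
    ext x
    rw [Set.mem_range, Set.mem_range, hcrange,
      forall_apply_iff_of_range hbrange (fun z => f z - n ≠ x),
      ← mem_image_window_iff hbij hper hbound]
    exact exists_apply_iff_of_range hd (fun y => f y = x)
  refine ⟨fun i => ?_, fun i j hij => ?_, hbmono.injective,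
    congrFun ((hfd_mono.range_inj hcmono).1 hfd_range)⟩
  · have := (hbound (b i)).2
    have := hb i
    omega
  · exact hbmono.injective (hbij.injective (sub_left_injective hij))

/-- A bounded affine permutation `f ∈ Bound(k,n)` whose subsequence of window
entries lying in `[n]` is increasing arises from a rank set: with `b` the
increasing enumeration of `{i ∈ [n] : f i > n}` and `a_i = f(b_i) - n`,
the intervals `[a_i, b_i]` form a rank set with `b_i ≤ n`, and the associated
affine permutation `f_M` (sending `b_i ↦ a_i + n` and the ordered complement
`d` of the `b`'s to the ordered complement `c` of the `a`'s) equals `f`. -/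
theorem stmt17 (n k : ℕ) (hn : 1 ≤ n) (hkn : k ≤ n)
    (f : ℤ → ℤ) (hbij : Function.Bijective f)
    (hper : ∀ i : ℤ, f (i + n) = f i + n)
    (hbound : ∀ i : ℤ, i ≤ f i ∧ f i ≤ i + n)
    (hav : ∑ i ∈ Finset.Icc (1 : ℤ) n, (f i - i) = k * n)
    (hincr : ∀ i j : ℤ, 1 ≤ i → i < j → j ≤ n → f i ≤ n → f j ≤ n → f i < f j)
    (b : Fin k → ℤ) (hbmono : StrictMono b)
    (hbrange : ∀ x : ℤ, (∃ i, b i = x) ↔ (1 ≤ x ∧ x ≤ n ∧ (n : ℤ) < f x))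
    (c d : Fin (n - k) → ℤ)
    (hcmono : StrictMono c) (hdmono : StrictMono d)
    (hcrange : ∀ x : ℤ, (∃ i, c i = x) ↔ (1 ≤ x ∧ x ≤ n ∧ ∀ j, f (b j) - n ≠ x))
    (hdrange : ∀ x : ℤ, (∃ i, d i = x) ↔ (1 ≤ x ∧ x ≤ n ∧ ∀ j, b j ≠ x)) :
    (∀ i : Fin k, 1 ≤ f (b i) - n ∧ f (b i) - n ≤ b i ∧ b i ≤ n) ∧
    Function.Injective (fun i : Fin k => f (b i) - n) ∧
    Function.Injective b ∧
    (∀ i : Fin (n - k), f (d i) = c i) :=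
  stmt17_general n k f hbij hper hbound hincr b hbmono hbrange c d hcmono hdmono hcrange hdrange
end
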